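/- Let r' : {(x,y) : x > 0} × ℝ → ℝ³ be defined by r'(x,y) = ( (1/√3)(e^y/sinh(√3 x))(sinh²(√3 x) + 3y), −(1/√3) e^{−2y} coth(√3 x), −(1/√3) e^y / sinh(√3 x) ). Then each component of r' satisfies, for all x > 0 and y ∈ ℝ, the vector Laplace equation ∂²r'/∂x² + ∂²r'/∂y² = (6/sinh²(√3 x) + 4) · r'(x,y). -/

import Mathlib

/-- Real hyperbolic cotangent. -/
noncomputable def coth (x : ℝ) : ℝ := Real.cosh x / Real.sinh x

/-- The isothermal parametrization of Hildebrand's case-1 affine sphere. -/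
noncomputable def r' (x y : ℝ) : Fin 3 → ℝ :=
  ![ (1 / Real.sqrt 3) * (Real.exp y / Real.sinh (Real.sqrt 3 * x)) *
       ((Real.sinh (Real.sqrt 3 * x)) ^ 2 + 3 * y),
     -(1 / Real.sqrt 3) * Real.exp (-2 * y) * coth (Real.sqrt 3 * x),
     -(1 / Real.sqrt 3) * Real.exp y / Real.sinh (Real.sqrt 3 * x) ]

/-!
In each variable separately, every component of `r'` is a constant multiple of one of three
one-variable profiles: `(b sinh² (a s) + c) / sinh (a s)`, `coth (a s)` or `(p + q s) e^{c s}`.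
Their second derivatives are `a² (b S + c/S + 2c/S³)`, `2a² coth (a s) / S²` and
`(c² (p + q s) + 2cq) e^{c s}` (with `S = sinh (a s)`), so for `a = √3` the Laplace equation
becomes an algebraic identity in `S`, `cosh`, `e^y` and `y`.
-/

open Real Filter Topology

lemma deriv_deriv_eq_of_hasDerivAt {f f' : ℝ → ℝ} {f'' x : ℝ}
    (hf : ∀ᶠ t in 𝓝 x, HasDerivAt f (f' t) t) (hf' : HasDerivAt f' f'' x) :
    deriv (deriv f) x = f'' := by
  have hderiv : deriv f =ᶠ[𝓝 x] f' := hf.mono fun t ht => ht.deriv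
  rw [hderiv.deriv_eq, hf'.deriv]

lemma hasDerivAt_exp_const_mul (c t : ℝ) :
    HasDerivAt (fun s => exp (c * s)) (c * exp (c * t)) t := by
  simpa [mul_comm] using ((hasDerivAt_id t).const_mul c).exp

lemma hasDerivAt_sinh_const_mul (a t : ℝ) :
    HasDerivAt (fun s => sinh (a * s)) (a * cosh (a * t)) t := by
  simpa [mul_comm] using ((hasDerivAt_id t).const_mul a).sinh

lemma hasDerivAt_cosh_const_mul (a t : ℝ) :
    HasDerivAt (fun s => cosh (a * s)) (a * sinh (a * t)) t := by
  simpa [mul_comm] using ((hasDerivAt_id t).const_mul a).cosh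

lemma deriv_deriv_affine_mul_exp (p q c y : ℝ) :
    deriv (deriv fun s => (p + q * s) * exp (c * s)) y =
      (c ^ 2 * (p + q * y) + 2 * c * q) * exp (c * y) := by
  have hlin (t : ℝ) : HasDerivAt (fun s => p + q * s) q t := by
    simpa using ((hasDerivAt_id t).const_mul q).const_add p
  refine deriv_deriv_eq_of_hasDerivAt (f' := fun t => (c * (p + q * t) + q) * exp (c * t))
    (Eventually.of_forall fun t => ?_) ?_
  · exact ((hlin t).mul (hasDerivAt_exp_const_mul c t)).congr_deriv (by ring)
  · exact ((((hlin y).const_mul c).add_const q).mul (hasDerivAt_exp_const_mul c y)).congr_deriv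
      (by ring)

lemma eventually_sinh_const_mul_ne_zero {a x : ℝ} (hx : sinh (a * x) ≠ 0) :
    ∀ᶠ t in 𝓝 x, sinh (a * t) ≠ 0 :=
  (continuous_sinh.comp (continuous_const.mul continuous_id)).continuousAt.eventually_ne hx

lemma deriv_deriv_sinh_sq_add_div_sinh {a x : ℝ} (b c : ℝ) (hx : sinh (a * x) ≠ 0) :
    deriv (deriv fun s => (b * sinh (a * s) ^ 2 + c) / sinh (a * s)) x =
      a ^ 2 * (b * sinh (a * x) + c / sinh (a * x) + 2 * c / sinh (a * x) ^ 3) := by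
  refine deriv_deriv_eq_of_hasDerivAt
    (f' := fun t => a * cosh (a * t) * (b - c / sinh (a * t) ^ 2)) ?_ ?_
  · filter_upwards [eventually_sinh_const_mul_ne_zero hx] with t ht
    have hS := hasDerivAt_sinh_const_mul a t
    refine ((((hS.fun_pow 2).const_mul b).add_const c).div hS ht).congr_deriv ?_
    field_simp
    ring
  · have hS := hasDerivAt_sinh_const_mul a x
    refine (((hasDerivAt_cosh_const_mul a x).const_mul a).mul
      (((hS.fun_pow 2).fun_inv (pow_ne_zero 2 hx)).const_mul c |>.const_sub b)).congr_deriv ?_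
    field_simp
    linear_combination (2 * a ^ 2 * c * sinh (a * x)) * cosh_sq (a * x)

lemma deriv_deriv_coth_const_mul {a x : ℝ} (hx : sinh (a * x) ≠ 0) :
    deriv (deriv fun s => coth (a * s)) x = 2 * a ^ 2 * coth (a * x) / sinh (a * x) ^ 2 := by
  simp only [coth]
  refine deriv_deriv_eq_of_hasDerivAt (f' := fun t => -a / sinh (a * t) ^ 2) ?_ ?_
  · filter_upwards [eventually_sinh_const_mul_ne_zero hx] with t ht
    refine ((hasDerivAt_cosh_const_mul a t).div (hasDerivAt_sinh_const_mul a t) ht).congr_deriv ?_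
    field_simp
    linear_combination (-a) * cosh_sq (a * t)
  · refine ((hasDerivAt_const x (-a)).div ((hasDerivAt_sinh_const_mul a x).fun_pow 2)
      (pow_ne_zero 2 hx)).congr_deriv ?_
    field_simp
    ring

lemma laplacian_r'_zero {x : ℝ} (y : ℝ) (hx : sinh (√3 * x) ≠ 0) :
    deriv (deriv fun s => r' s y 0) x + deriv (deriv fun s => r' x s 0) y
      = (6 / sinh (√3 * x) ^ 2 + 4) * r' x y 0 := by
  have hx_fun : (fun s => r' s y 0) =
      fun s => exp y / √3 * ((1 * sinh (√3 * s) ^ 2 + 3 * y) / sinh (√3 * s)) := by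
    funext s; simp only [r', Matrix.cons_val_zero]; ring
  have hy_fun : (fun s => r' x s 0) =
      fun s => 1 / (√3 * sinh (√3 * x)) * ((sinh (√3 * x) ^ 2 + 3 * s) * exp (1 * s)) := by
    funext s; simp only [r', Matrix.cons_val_zero, one_mul]; ring
  simp only [hx_fun, hy_fun, deriv_const_mul_field']
  rw [deriv_deriv_sinh_sq_add_div_sinh _ _ hx, deriv_deriv_affine_mul_exp]
  simp only [r', Matrix.cons_val_zero, one_mul, sq_sqrt zero_le_three]
  field_simp
  ring

lemma laplacian_r'_one {x : ℝ} (y : ℝ) (hx : sinh (√3 * x) ≠ 0) :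
    deriv (deriv fun s => r' s y 1) x + deriv (deriv fun s => r' x s 1) y
      = (6 / sinh (√3 * x) ^ 2 + 4) * r' x y 1 := by
  have hx_fun : (fun s => r' s y 1) =
      fun s => -(1 / √3) * exp (-2 * y) * coth (√3 * s) := by
    funext s; simp only [r', Matrix.cons_val_one, Matrix.cons_val_zero]
  have hy_fun : (fun s => r' x s 1) =
      fun s => -(1 / √3) * coth (√3 * x) * ((1 + 0 * s) * exp (-2 * s)) := by
    funext s; simp only [r', Matrix.cons_val_one, Matrix.cons_val_zero]; ring
  simp only [hx_fun, hy_fun, deriv_const_mul_field']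
  rw [deriv_deriv_coth_const_mul hx, deriv_deriv_affine_mul_exp]
  simp only [r', coth, Matrix.cons_val_one, Matrix.cons_val_zero, sq_sqrt zero_le_three]
  field_simp
  ring

lemma laplacian_r'_two {x : ℝ} (y : ℝ) (hx : sinh (√3 * x) ≠ 0) :
    deriv (deriv fun s => r' s y 2) x + deriv (deriv fun s => r' x s 2) y
      = (6 / sinh (√3 * x) ^ 2 + 4) * r' x y 2 := by
  have hx_fun : (fun s => r' s y 2) =
      fun s => -(1 / √3) * exp y * ((0 * sinh (√3 * s) ^ 2 + 1) / sinh (√3 * s)) := by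
    funext s; simp only [r', Matrix.cons_val_two, Matrix.tail_cons, Matrix.head_cons]; ring
  have hy_fun : (fun s => r' x s 2) =
      fun s => -(1 / √3) / sinh (√3 * x) * ((1 + 0 * s) * exp (1 * s)) := by
    funext s; simp only [r', Matrix.cons_val_two, Matrix.tail_cons, Matrix.head_cons, one_mul]; ring
  simp only [hx_fun, hy_fun, deriv_const_mul_field']
  rw [deriv_deriv_sinh_sq_add_div_sinh _ _ hx, deriv_deriv_affine_mul_exp]
  simp only [r', Matrix.cons_val_two, Matrix.tail_cons, Matrix.head_cons, one_mul,
    sq_sqrt zero_le_three]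
  field_simp
  ring

/-- Each component of `r'` satisfies the affine-sphere equation
`Δ r' = (6/sinh²(√3 x) + 4) r'`. -/
theorem affine_sphere_laplace_case1 :
    ∀ x : ℝ, 0 < x → ∀ y : ℝ, ∀ i : Fin 3,
      deriv (deriv fun s => r' s y i) x + deriv (deriv fun s => r' x s i) y
        = (6 / (Real.sinh (Real.sqrt 3 * x)) ^ 2 + 4) * r' x y i := by
  intro x hx y i
  have hS : sinh (√3 * x) ≠ 0 := sinh_ne_zero.mpr (by positivity)
  fin_cases i
  · exact laplacian_r'_zero y hS
  · exact laplacian_r'_one y hS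
  · exact laplacian_r'_two y hS
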